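/- arXiv:0902.3039 — 3 statements merged into one kernel-verified Lean document; each statement's English description precedes it below -/
import Mathlib

section
/- Let a, b be real numbers with 1/3 < a − b < 4/π² and 1/2 < a ≤ 2/π − b, and define f_{a,b}(x) = (1+x)^b (1-x)^{-a} · arccos(x) for x ∈ (0,1). Then f_{a,b} has a unique minimum on (0,1); more precisely, there exists a unique point x₀ ∈ (0,1) such that f_{a,b} is strictly decreasing on (0, x₀] and strictly increasing on [x₀, 1). -/
/-!
Writing `f_{a,b}' = (1+x)^(b-1) (1-x)^(-a-1) g` and `g' = h / √(1 - x²)`, one finds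
`h' = (1 - 2c) - c ψ` with `c = a - b` and `ψ x = x arccos x / √(1 - x²)`. Since `ψ` increases
from `0` to `1` and `1/3 < c < 1/2`, `h` increases and then decreases on `[0, 1]`; as `h 1 < 0`,
`h` is negative, then positive, then negative. So `g` decreases, increases and decreases again.
With `g 1 = 0` and `g 0 ≤ 0` (where `g 0 = 0` forces `h 0 < 0`, by `c < 4/π²`), `g` changes sign
exactly once on `(0, 1)`, from negative to positive, and there `f_{a,b}` has its minimum.
-/

open Real Set

section SignChange

variable {φ : ℝ → ℝ} {p q : ℝ}

lemma exists_sign_change_of_strictMonoOn (hpq : p < q) (hc : ContinuousOn φ (Icc p q))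
    (hφ : StrictMonoOn φ (Icc p q)) (hq : 0 < φ q) :
    ∃ z ∈ Ico p q, 0 ≤ φ z ∧ (∀ x ∈ Ico p z, φ x < 0) ∧ ∀ x ∈ Ioc z q, 0 < φ x := by
  by_cases hp : 0 ≤ φ p
  · refine ⟨p, left_mem_Ico.2 hpq, hp, fun x hx => absurd hx.2 hx.1.not_gt, fun x hx => ?_⟩
    exact hp.trans_lt (hφ (left_mem_Icc.2 hpq.le) (Ioc_subset_Icc_self hx) hx.1)
  obtain ⟨z, hz, hφz⟩ := intermediate_value_Ioo hpq.le hc ⟨not_le.1 hp, hq⟩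
  refine ⟨z, Ioo_subset_Ico_self hz, hφz.ge, fun x hx => ?_, fun x hx => ?_⟩
  · exact hφz ▸ hφ ⟨hx.1, hx.2.le.trans hz.2.le⟩ (Ioo_subset_Icc_self hz) hx.2
  · exact hφz ▸ hφ (Ioo_subset_Icc_self hz) ⟨hz.1.le.trans hx.1.le, hx.2⟩ hx.1

lemma exists_sign_change_of_strictAntiOn (hpq : p < q) (hc : ContinuousOn φ (Icc p q))
    (hφ : StrictAntiOn φ (Icc p q)) (hq : φ q < 0) :
    ∃ z ∈ Ico p q, φ z ≤ 0 ∧ (∀ x ∈ Ico p z, 0 < φ x) ∧ ∀ x ∈ Ioc z q, φ x < 0 := by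
  obtain ⟨z, hz, hφz, hneg, hpos⟩ :=
    exists_sign_change_of_strictMonoOn hpq hc.neg hφ.neg (neg_pos.2 hq)
  exact ⟨z, hz, neg_nonneg.1 hφz, fun x hx => neg_neg_iff_pos.1 (hneg x hx),
    fun x hx => neg_pos.1 (hpos x hx)⟩

lemma exists_sign_change_of_strictAntiOn_strictMonoOn_strictAntiOn {α β : ℝ}
    (hpα : p ≤ α) (hαβ : α ≤ β) (hβq : β < q) (hc : ContinuousOn φ (Icc α β))
    (h₁ : StrictAntiOn φ (Icc p α)) (h₂ : StrictMonoOn φ (Icc α β))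
    (h₃ : StrictAntiOn φ (Icc β q)) (hφp : φ p ≤ 0) (hφα : φ α < 0) (hφq : φ q = 0) :
    ∃ x₀ ∈ Ioo p q, (∀ x ∈ Ioo p x₀, φ x < 0) ∧ ∀ x ∈ Ioo x₀ q, 0 < φ x := by
  have hφβ : 0 < φ β := hφq ▸ h₃ (left_mem_Icc.2 hβq.le) (right_mem_Icc.2 hβq.le) hβq
  have hαβ' : α < β := hαβ.lt_of_ne (by rintro rfl; linarith)
  obtain ⟨x₀, hx₀, hφx₀, hneg, hpos⟩ := exists_sign_change_of_strictMonoOn hαβ' hc h₂ hφβ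
  have hαx₀ : α < x₀ := hx₀.1.lt_of_ne (by rintro rfl; linarith)
  refine ⟨x₀, ⟨hpα.trans_lt hαx₀, hx₀.2.trans hβq⟩, fun x hx => ?_, fun x hx => ?_⟩
  · rcases le_or_gt x α with hxα | hαx
    · exact (h₁ ⟨le_rfl, hpα⟩ ⟨hx.1.le, hxα⟩ hx.1).trans_le hφp
    · exact hneg x ⟨hαx.le, hx.2⟩
  · rcases le_or_gt x β with hxβ | hβx
    · exact hpos x ⟨hx.1, hxβ⟩
    · exact hφq ▸ h₃ ⟨hβx.le, hx.2.le⟩ ⟨hβq.le, le_rfl⟩ hx.2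

end SignChange

lemma le_of_strictAntiOn_Ioc_of_strictMonoOn_Ico {α β : Type*} [LinearOrder α] [Preorder β]
    {f : α → β} {p q x y : α} (hpx : p < x) (hyq : y < q)
    (hanti : StrictAntiOn f (Ioc p y)) (hmono : StrictMonoOn f (Ico x q)) : y ≤ x := by
  by_contra! hxy
  exact (hanti ⟨hpx, hxy.le⟩ ⟨hpx.trans hxy, le_rfl⟩ hxy).asymm
    (hmono ⟨le_rfl, hxy.trans hyq⟩ ⟨hxy.le, hyq⟩ hxy)

lemma mul_sqrt_one_sub_sq_lt_arccos {x : ℝ} (h₀ : -1 ≤ x) (h₁ : x < 1) :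
    x * √(1 - x ^ 2) < arccos x := by
  have h := sin_lt (by linarith [arccos_pos.2 h₁] : 0 < 2 * arccos x)
  rw [sin_two_mul, sin_arccos, cos_arccos h₀ h₁.le] at h
  linarith

lemma sqrt_one_sub_sq_le_arccos (x : ℝ) : √(1 - x ^ 2) ≤ arccos x :=
  sin_arccos x ▸ sin_le (arccos_nonneg x)

lemma hasDerivAt_sqrt_one_sub_sq {x : ℝ} (h₀ : -1 < x) (h₁ : x < 1) :
    HasDerivAt (fun y : ℝ => √(1 - y ^ 2)) (-x / √(1 - x ^ 2)) x := by
  have hpos : 0 < 1 - x ^ 2 := by nlinarith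
  have h := (hasDerivAt_sqrt hpos.ne').comp x ((hasDerivAt_pow 2 x).const_sub 1)
  refine h.congr_deriv ?_
  have := sqrt_pos.2 hpos
  field_simp
  ring

namespace CarlsonArccos

noncomputable def f (a b x : ℝ) : ℝ := (1 + x) ^ b * (1 - x) ^ (-a) * arccos x

noncomputable def g (a b x : ℝ) : ℝ := (a * (1 + x) + b * (1 - x)) * arccos x - √(1 - x ^ 2)

noncomputable def h (a b x : ℝ) : ℝ :=
  (a - b) * (√(1 - x ^ 2) * arccos x) + (1 - (a - b)) * x - (a + b)

noncomputable def ψ (x : ℝ) : ℝ := x * arccos x / √(1 - x ^ 2)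

variable {a b : ℝ}

lemma continuous_g (a b : ℝ) : Continuous (g a b) := by
  unfold g; fun_prop

lemma continuous_h (a b : ℝ) : Continuous (h a b) := by
  unfold h; fun_prop

lemma g_zero (a b : ℝ) : g a b 0 = (a + b) * (π / 2) - 1 := by
  simp [g]

lemma g_one (a b : ℝ) : g a b 1 = 0 := by
  simp [g]

lemma h_zero (a b : ℝ) : h a b 0 = (a - b) * (π / 2) - (a + b) := by
  simp [h]

lemma h_one (a b : ℝ) : h a b 1 = 1 - 2 * a := by
  simp only [h, one_pow, sub_self, sqrt_zero, arccos_one, mul_zero, mul_one, zero_add]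
  ring

lemma hasDerivAt_f {x : ℝ} (h₀ : -1 < x) (h₁ : x < 1) :
    HasDerivAt (f a b) ((1 + x) ^ (b - 1) * (1 - x) ^ (-a - 1) * g a b x) x := by
  have hp : 0 < 1 + x := by linarith
  have hm : 0 < 1 - x := by linarith
  have hs : √(1 - x ^ 2) ^ 2 = 1 - x ^ 2 := sq_sqrt (by nlinarith)
  have hs₀ : 0 < √(1 - x ^ 2) := sqrt_pos.2 (by nlinarith)
  have hP : HasDerivAt (fun y : ℝ => (1 + y) ^ b) (b * (1 + x) ^ (b - 1)) x := by
    simpa using ((hasDerivAt_id' x).const_add 1).rpow_const (p := b) (Or.inl hp.ne')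
  have hQ : HasDerivAt (fun y : ℝ => (1 - y) ^ (-a)) (a * (1 - x) ^ (-a - 1)) x := by
    simpa using ((hasDerivAt_id' x).const_sub 1).rpow_const (p := -a) (Or.inl hm.ne')
  refine ((hP.fun_mul hQ).fun_mul (hasDerivAt_arccos (by linarith) h₁.ne)).congr_deriv ?_
  rw [show (1 + x) ^ b = (1 + x) ^ (b - 1) * (1 + x) by rw [← rpow_add_one hp.ne']; ring_nf,
    show (1 - x) ^ (-a) = (1 - x) ^ (-a - 1) * (1 - x) by rw [← rpow_add_one hm.ne']; ring_nf]
  unfold g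
  field_simp
  linear_combination hs

lemma hasDerivAt_g {x : ℝ} (h₀ : -1 < x) (h₁ : x < 1) :
    HasDerivAt (g a b) (h a b x / √(1 - x ^ 2)) x := by
  have hs₀ : 0 < √(1 - x ^ 2) := sqrt_pos.2 (by nlinarith)
  have hlin : HasDerivAt (fun y : ℝ => a * (1 + y) + b * (1 - y)) (a - b) x := by
    exact ((((hasDerivAt_id' x).const_add 1).const_mul a).fun_add
      (((hasDerivAt_id' x).const_sub 1).const_mul b)).congr_deriv (by ring)
  refine ((hlin.fun_mul (hasDerivAt_arccos (by linarith) h₁.ne)).fun_sub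
    (hasDerivAt_sqrt_one_sub_sq h₀ h₁)).congr_deriv ?_
  unfold h
  field_simp
  ring

lemma hasDerivAt_h {x : ℝ} (h₀ : -1 < x) (h₁ : x < 1) :
    HasDerivAt (h a b) (1 - 2 * (a - b) - (a - b) * ψ x) x := by
  have hs₀ : 0 < √(1 - x ^ 2) := sqrt_pos.2 (by nlinarith)
  have hw := (hasDerivAt_sqrt_one_sub_sq h₀ h₁).fun_mul (hasDerivAt_arccos (by linarith) h₁.ne)
  have hlin : HasDerivAt (fun y : ℝ => (1 - (a - b)) * y - (a + b)) (1 - (a - b)) x := by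
    simpa using ((hasDerivAt_id x).const_mul (1 - (a - b))).sub_const (a + b)
  have := (hw.const_mul (a - b)).fun_add hlin
  refine (this.congr_deriv ?_).congr_of_eventuallyEq (.of_forall fun y => by simp only [h]; ring)
  unfold ψ
  field_simp
  ring

lemma hasDerivAt_ψ {x : ℝ} (h₀ : -1 < x) (h₁ : x < 1) :
    HasDerivAt ψ ((arccos x - x * √(1 - x ^ 2)) / (√(1 - x ^ 2) * (1 - x ^ 2))) x := by
  have hpos : 0 < 1 - x ^ 2 := by nlinarith
  have hs₀ : 0 < √(1 - x ^ 2) := sqrt_pos.2 hpos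
  have hs : √(1 - x ^ 2) ^ 2 = 1 - x ^ 2 := sq_sqrt hpos.le
  have hu := (hasDerivAt_id' x).fun_mul (hasDerivAt_arccos (by linarith) h₁.ne)
  refine (hu.fun_div (hasDerivAt_sqrt_one_sub_sq h₀ h₁) hs₀.ne').congr_deriv ?_
  field_simp
  linear_combination (x * √(1 - x ^ 2) - x ^ 2 * arccos x) * hs

lemma strictMonoOn_ψ : StrictMonoOn ψ (Ioo (-1) 1) := by
  refine strictMonoOn_of_deriv_pos (convex_Ioo _ _)
    (fun x hx => (hasDerivAt_ψ hx.1 hx.2).continuousAt.continuousWithinAt) fun x hx => ?_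
  rw [interior_Ioo] at hx
  have hpos : 0 < 1 - x ^ 2 := by nlinarith [hx.1, hx.2]
  rw [(hasDerivAt_ψ hx.1 hx.2).deriv]
  exact div_pos (sub_pos.2 (mul_sqrt_one_sub_sq_lt_arccos hx.1.le hx.2))
    (mul_pos (sqrt_pos.2 hpos) hpos)

lemma exists_ψ_eq {v : ℝ} (hv₀ : 0 < v) (hv₁ : v < 1) : ∃ m ∈ Ioo 0 1, ψ m = v := by
  obtain ⟨t, hvt, ht⟩ := exists_between hv₁
  have ht₀ : 0 < t := hv₀.trans hvt
  have hψt : t ≤ ψ t := by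
    rw [ψ, le_div_iff₀ (sqrt_pos.2 (by nlinarith))]
    exact mul_le_mul_of_nonneg_left (sqrt_one_sub_sq_le_arccos t) (by positivity)
  have hc : ContinuousOn ψ (Icc 0 t) := fun x hx =>
    (hasDerivAt_ψ (by linarith [hx.1]) (hx.2.trans_lt ht)).continuousAt.continuousWithinAt
  obtain ⟨m, hm, hψm⟩ := intermediate_value_Ioo ht₀.le hc
    ⟨by simpa [ψ] using hv₀, by linarith⟩
  exact ⟨m, ⟨hm.1, hm.2.trans ht⟩, hψm⟩

lemma strictAntiOn_f {D : Set ℝ} (hD : Convex ℝ D) (hD₁ : D ⊆ Ioo (-1) 1)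
    (hg : ∀ x ∈ interior D, g a b x < 0) : StrictAntiOn (f a b) D := by
  refine strictAntiOn_of_deriv_neg hD (fun x hx => ?_) fun x hx => ?_
  · exact (hasDerivAt_f (hD₁ hx).1 (hD₁ hx).2).continuousAt.continuousWithinAt
  obtain ⟨h₀, h₁⟩ := hD₁ (interior_subset hx)
  rw [(hasDerivAt_f h₀ h₁).deriv]
  exact mul_neg_of_pos_of_neg
    (mul_pos (rpow_pos_of_pos (by linarith) _) (rpow_pos_of_pos (by linarith) _)) (hg x hx)

lemma strictMonoOn_f {D : Set ℝ} (hD : Convex ℝ D) (hD₁ : D ⊆ Ioo (-1) 1)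
    (hg : ∀ x ∈ interior D, 0 < g a b x) : StrictMonoOn (f a b) D := by
  refine strictMonoOn_of_deriv_pos hD (fun x hx => ?_) fun x hx => ?_
  · exact (hasDerivAt_f (hD₁ hx).1 (hD₁ hx).2).continuousAt.continuousWithinAt
  obtain ⟨h₀, h₁⟩ := hD₁ (interior_subset hx)
  rw [(hasDerivAt_f h₀ h₁).deriv]
  exact mul_pos
    (mul_pos (rpow_pos_of_pos (by linarith) _) (rpow_pos_of_pos (by linarith) _)) (hg x hx)

lemma strictAntiOn_g {s t : ℝ} (hs : -1 ≤ s) (ht : t ≤ 1) (hh : ∀ x ∈ Ioo s t, h a b x < 0) :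
    StrictAntiOn (g a b) (Icc s t) := by
  refine strictAntiOn_of_deriv_neg (convex_Icc s t) (continuous_g a b).continuousOn
    fun x hx => ?_
  rw [interior_Icc] at hx
  have h₀ : -1 < x := hs.trans_lt hx.1
  have h₁ : x < 1 := hx.2.trans_le ht
  rw [(hasDerivAt_g h₀ h₁).deriv]
  exact div_neg_of_neg_of_pos (hh x hx) (sqrt_pos.2 (by nlinarith))

lemma strictMonoOn_g {s t : ℝ} (hs : -1 ≤ s) (ht : t ≤ 1) (hh : ∀ x ∈ Ioo s t, 0 < h a b x) :
    StrictMonoOn (g a b) (Icc s t) := by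
  refine strictMonoOn_of_deriv_pos (convex_Icc s t) (continuous_g a b).continuousOn
    fun x hx => ?_
  rw [interior_Icc] at hx
  have h₀ : -1 < x := hs.trans_lt hx.1
  have h₁ : x < 1 := hx.2.trans_le ht
  rw [(hasDerivAt_g h₀ h₁).deriv]
  exact div_pos (hh x hx) (sqrt_pos.2 (by nlinarith))

lemma exists_strictMonoOn_h_strictAntiOn_h (hc₁ : 1 / 3 < a - b) (hc₂ : a - b < 1 / 2) :
    ∃ m ∈ Ioo 0 1, StrictMonoOn (h a b) (Icc 0 m) ∧ StrictAntiOn (h a b) (Icc m 1) := by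
  have hc₀ : 0 < a - b := by linarith
  obtain ⟨m, hm, hψm⟩ := exists_ψ_eq (v := (1 - 2 * (a - b)) / (a - b))
    (div_pos (by linarith) hc₀) ((div_lt_one hc₀).2 (by linarith))
  have hderiv {x : ℝ} (hx : x ∈ Ioo 0 1) : deriv (h a b) x = (a - b) * (ψ m - ψ x) := by
    rw [(hasDerivAt_h (by linarith [hx.1]) hx.2).deriv, hψm]
    field_simp
  refine ⟨m, hm, strictMonoOn_of_deriv_pos (convex_Icc 0 m) (continuous_h a b).continuousOn
    fun x hx => ?_, strictAntiOn_of_deriv_neg (convex_Icc m 1) (continuous_h a b).continuousOn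
    fun x hx => ?_⟩
  all_goals rw [interior_Icc] at hx
  · have hx₁ : x ∈ Ioo 0 1 := ⟨hx.1, hx.2.trans hm.2⟩
    rw [hderiv hx₁]
    exact mul_pos hc₀ (sub_pos.2 (strictMonoOn_ψ (Ioo_subset_Ioo_left (by norm_num) hx₁)
      (Ioo_subset_Ioo_left (by norm_num) hm) hx.2))
  · have hx₁ : x ∈ Ioo 0 1 := ⟨hm.1.trans hx.1, hx.2⟩
    rw [hderiv hx₁]
    exact mul_neg_of_pos_of_neg hc₀ (sub_neg.2 (strictMonoOn_ψ
      (Ioo_subset_Ioo_left (by norm_num) hm) (Ioo_subset_Ioo_left (by norm_num) hx₁) hx.1))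

lemma exists_sign_change_g (h₁ : 1 / 3 < a - b) (h₂ : a - b < 4 / π ^ 2) (h₃ : 1 / 2 < a)
    (h₄ : a ≤ 2 / π - b) :
    ∃ x₀ ∈ Ioo 0 1, (∀ x ∈ Ioo 0 x₀, g a b x < 0) ∧ ∀ x ∈ Ioo x₀ 1, 0 < g a b x := by
  have hπ : 0 < π := pi_pos
  have hc : a - b < 1 / 2 := h₂.trans <| by
    rw [div_lt_iff₀ (by positivity)]; nlinarith [pi_gt_three]
  have hg₀ : g a b 0 ≤ 0 := by
    rw [g_zero]
    have : (a + b) * π ≤ 2 := by rw [le_sub_iff_add_le, le_div_iff₀ hπ] at h₄; linarith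
    linarith
  have hh₀ : g a b 0 = 0 → h a b 0 < 0 := by
    rw [g_zero, h_zero]
    intro hab
    have hab : a + b = 2 / π := by field_simp; linarith
    rw [lt_div_iff₀ (by positivity)] at h₂
    rw [hab, show (a - b) * (π / 2) - 2 / π = ((a - b) * π ^ 2 - 4) / (2 * π) by field_simp; ring]
    exact div_neg_of_neg_of_pos (by linarith) (by positivity)
  have hh₁ : h a b 1 < 0 := by rw [h_one]; linarith
  obtain ⟨m, hm, hmono, hanti⟩ := exists_strictMonoOn_h_strictAntiOn_h h₁ hc
  have hhm : 0 < h a b m := by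
    by_contra! hhm
    have hA : StrictAntiOn (g a b) (Icc 0 m) := strictAntiOn_g (by norm_num) hm.2.le
      fun x hx => (hmono ⟨hx.1.le, hx.2.le⟩ (right_mem_Icc.2 hm.1.le) hx.2).trans_le hhm
    have hB : StrictAntiOn (g a b) (Icc m 1) := strictAntiOn_g (by linarith [hm.1]) le_rfl
      fun x hx => (hanti (left_mem_Icc.2 hm.2.le) ⟨hx.1.le, hx.2.le⟩ hx.1).trans_le hhm
    have := hA (left_mem_Icc.2 hm.1.le) (right_mem_Icc.2 hm.1.le) hm.1
    have := hB (left_mem_Icc.2 hm.2.le) (right_mem_Icc.2 hm.2.le) hm.2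
    linarith [g_one a b]
  obtain ⟨β, hβ, -, hposβ, hnegβ⟩ :=
    exists_sign_change_of_strictAntiOn hm.2 (continuous_h a b).continuousOn hanti hh₁
  obtain ⟨α, hα, hhα, hnegα, hposα⟩ :=
    exists_sign_change_of_strictMonoOn hm.1 (continuous_h a b).continuousOn hmono hhm
  have hgAnti₀ : StrictAntiOn (g a b) (Icc 0 α) :=
    strictAntiOn_g (by norm_num) (by linarith [hα.2, hm.2]) fun x hx => hnegα x ⟨hx.1.le, hx.2⟩
  have hgα : g a b α < 0 := by
    rcases hα.1.eq_or_lt with rfl | hα₀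
    · exact hg₀.lt_of_ne fun h0 => (hh₀ h0).not_ge hhα
    · exact (hgAnti₀ (left_mem_Icc.2 hα₀.le) (right_mem_Icc.2 hα₀.le) hα₀).trans_le hg₀
  refine exists_sign_change_of_strictAntiOn_strictMonoOn_strictAntiOn hα.1
    (hα.2.le.trans hβ.1) hβ.2 (continuous_g a b).continuousOn hgAnti₀ ?_ ?_ hg₀ hgα (g_one a b)
  · refine strictMonoOn_g (by linarith [hα.1]) (by linarith [hβ.2]) fun x hx => ?_
    rcases le_or_gt x m with hxm | hmx
    · exact hposα x ⟨hx.1, hxm⟩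
    · exact hposβ x ⟨hmx.le, hx.2⟩
  · exact strictAntiOn_g (by linarith [hβ.1, hm.1]) le_rfl fun x hx => hnegβ x ⟨hx.1, hx.2.le⟩

end CarlsonArccos

open CarlsonArccos

theorem carlson_arccos_unique_minimum (a b : ℝ)
    (h1 : 1 / 3 < a - b) (h2 : a - b < 4 / Real.pi ^ 2)
    (h3 : 1 / 2 < a) (h4 : a ≤ 2 / Real.pi - b) :
    ∃! x₀ : ℝ, x₀ ∈ Set.Ioo (0 : ℝ) 1 ∧
      StrictAntiOn (fun x : ℝ => (1 + x) ^ b * (1 - x) ^ (-a) * Real.arccos x)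
        (Set.Ioc 0 x₀) ∧
      StrictMonoOn (fun x : ℝ => (1 + x) ^ b * (1 - x) ^ (-a) * Real.arccos x)
        (Set.Ico x₀ 1) := by
  obtain ⟨x₀, hx₀, hneg, hpos⟩ := exists_sign_change_g h1 h2 h3 h4
  have hanti : StrictAntiOn (f a b) (Ioc 0 x₀) :=
    strictAntiOn_f (convex_Ioc 0 x₀) (fun x hx => ⟨by linarith [hx.1], hx.2.trans_lt hx₀.2⟩)
      (by rwa [interior_Ioc])
  have hmono : StrictMonoOn (f a b) (Ico x₀ 1) :=
    strictMonoOn_f (convex_Ico x₀ 1) (fun x hx => ⟨by linarith [hx.1, hx₀.1], hx.2⟩)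
      (by rwa [interior_Ico])
  refine ⟨x₀, ⟨hx₀, hanti, hmono⟩, fun y ⟨hy, hyanti, hymono⟩ => le_antisymm ?_ ?_⟩
  · exact le_of_strictAntiOn_Ioc_of_strictMonoOn_Ico hx₀.1 hy.2 hyanti hmono
  · exact le_of_strictAntiOn_Ioc_of_strictMonoOn_Ico hy.1 hx₀.2 hanti hymono
end

section
/- Let a, b be real numbers with 1/3 < a − b < 4/π² and 1/2 < a ≤ 2/π − b. Suppose further that 16ab(b−a) + (a+b)² > 0 and that x₂ := ((a+b)(2b−2a+1) + √(16ab(b−a)+(a+b)²)) / (2(a−b)²) ∈ (0,1). Then for every x ∈ (0,1), arccos(x) ≥ ((1+x₂)^{b+1/2} (1−x₂)^{1/2−a} / (a+b+(a−b)x₂)) · (1−x)^a / (1+x)^b. -/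
/-!
Put `φ(x) = arccos x · (1 + x)^b / (1 - x)^a`, `L(x) = a + b + (a - b) x` and
`G(x) = (1 + x)^(b + 1/2) (1 - x)^(1/2 - a) / L(x)`; the claim is `φ ≥ G(x₂)` on `(0, 1)`.
Everything is governed by `ψ(x) = arccos x - √(1 - x²) / L(x)`: both `φ - G` and `φ'` are positive
multiples of `ψ`, while `ψ' = -Q / (√(1 - x²) L²)` and `G' = G Q / ((1 - x²) L)` for a quadratic `Q`
with roots `x₁ ≤ x₂`. Hence `ψ < 0` on `(0, x₁]` (as `ψ(0) ≤ 0` amounts to `(a + b) π ≤ 2`),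
`ψ > 0` on `[x₂, 1)` (as `ψ(1) = 0`), and `G` is minimal on `[x₁, 1)` at `x₂`. For `x ∈ (0, 1)` let
`z ≥ x` be the first point with `ψ(z) ≥ 0`; then `z > x₁` and `φ(x) ≥ φ(z) ≥ G(z) ≥ G(x₂)`.
-/

open Real Set

lemma exists_first_nonneg {f : ℝ → ℝ} {x y : ℝ} (hxy : x ≤ y) (hf : ContinuousOn f (Icc x y))
    (hy : 0 ≤ f y) : ∃ z ∈ Icc x y, 0 ≤ f z ∧ ∀ t ∈ Ico x z, f t < 0 := by
  set S := Icc x y ∩ f ⁻¹' Ici 0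
  have hS : IsCompact S := isCompact_Icc.of_isClosed_subset
    (hf.preimage_isClosed_of_isClosed isClosed_Icc isClosed_Ici) inter_subset_left
  obtain ⟨hz, hfz⟩ : sInf S ∈ S := hS.sInf_mem ⟨y, ⟨hxy, le_rfl⟩, hy⟩
  refine ⟨sInf S, hz, hfz, fun t ht => lt_of_not_ge fun hft => ht.2.not_ge ?_⟩
  exact csInf_le hS.bddBelow ⟨⟨ht.1, ht.2.le.trans hz.2⟩, hft⟩

namespace Carlson

variable {a b x₁ x₂ t : ℝ}

noncomputable def L (a b x : ℝ) : ℝ := a + b + (a - b) * x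

noncomputable def Q (a b x : ℝ) : ℝ :=
  (a - b) ^ 2 * x ^ 2 + (a + b) * (2 * a - 2 * b - 1) * x + (a + b) ^ 2 - (a - b)

noncomputable def root (a b s : ℝ) : ℝ := ((a + b) * (2 * b - 2 * a + 1) + s) / (2 * (a - b) ^ 2)

noncomputable def psi (a b x : ℝ) : ℝ := arccos x - √(1 - x ^ 2) / L a b x

noncomputable def phi (a b x : ℝ) : ℝ := arccos x * (1 + x) ^ b / (1 - x) ^ a

noncomputable def G (a b x : ℝ) : ℝ := (1 + x) ^ (b + 1 / 2) * (1 - x) ^ (1 / 2 - a) / L a b x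

lemma L_pos (hb : 0 < b) (hba : b ≤ a) (ht : -1 ≤ t) : 0 < L a b t := by
  unfold L; nlinarith

lemma Q_eq_mul_sub_root (hab : a ≠ b) {s : ℝ} (hs : s ^ 2 = 16 * a * b * (b - a) + (a + b) ^ 2)
    (t : ℝ) : Q a b t = (a - b) ^ 2 * (t - root a b (-s)) * (t - root a b s) := by
  have : a - b ≠ 0 := sub_ne_zero.mpr hab
  unfold Q root
  field_simp
  linear_combination hs

lemma root_neg_le_root {s : ℝ} (hs : 0 ≤ s) : root a b (-s) ≤ root a b s :=
  div_le_div_of_nonneg_right (by linarith) (by positivity)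

lemma hasDerivAt_L (x : ℝ) : HasDerivAt (L a b) (a - b) x := by
  show HasDerivAt (fun x => a + b + (a - b) * x) _ x
  simpa using ((hasDerivAt_id x).const_mul (a - b)).const_add (a + b)

lemma continuousAt_psi (hL : L a b t ≠ 0) : ContinuousAt (psi a b) t :=
  continuous_arccos.continuousAt.sub <|
    (continuous_sqrt.comp (by fun_prop)).continuousAt.div (hasDerivAt_L t).continuousAt hL

lemma hasDerivAt_psi (ht : t ∈ Ioo (-1) 1) (hL : L a b t ≠ 0) :
    HasDerivAt (psi a b) (-Q a b t / (√(1 - t ^ 2) * L a b t ^ 2)) t := by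
  have hpos : 0 < 1 - t ^ 2 := by nlinarith [ht.1, ht.2]
  have hsqrt : HasDerivAt (fun x => √(1 - x ^ 2)) (-(2 * t) / (2 * √(1 - t ^ 2))) t :=
    (((hasDerivAt_pow 2 t).const_sub 1).congr_deriv (by ring)).sqrt hpos.ne'
  refine ((hasDerivAt_arccos ht.1.ne' ht.2.ne).sub (hsqrt.div (hasDerivAt_L t) hL)).congr_deriv ?_
  have hu : √(1 - t ^ 2) ≠ 0 := (sqrt_pos.mpr hpos).ne'
  have hu2 : √(1 - t ^ 2) ^ 2 = 1 - t ^ 2 := sq_sqrt hpos.le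
  field_simp
  unfold Q L
  linear_combination (a - b) * hu2

lemma hasDerivAt_phi (ht : t ∈ Ioo (-1) 1) (hL : L a b t ≠ 0) :
    HasDerivAt (phi a b) ((1 + t) ^ b / (1 - t) ^ a * L a b t / (1 - t ^ 2) * psi a b t) t := by
  have h1 : 0 < 1 + t := by linarith [ht.1]
  have h2 : 0 < 1 - t := by linarith [ht.2]
  have hA := ((hasDerivAt_id t).const_add 1).rpow_const (p := b) (Or.inl h1.ne')
  have hB := ((hasDerivAt_id t).const_sub 1).rpow_const (p := a) (Or.inl h2.ne')
  refine (((hasDerivAt_arccos ht.1.ne' ht.2.ne).mul hA).div hB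
    (rpow_pos_of_pos h2 a).ne').congr_deriv ?_
  have hu2 : √(1 - t ^ 2) ^ 2 = 1 - t ^ 2 := sq_sqrt (by nlinarith)
  have hu : √(1 - t ^ 2) ≠ 0 := (sqrt_pos.mpr (by nlinarith)).ne'
  have h3 : 1 - t ^ 2 ≠ 0 := by nlinarith
  simp only [id, Pi.mul_apply, rpow_sub_one h1.ne', rpow_sub_one h2.ne']
  unfold psi
  field_simp
  unfold L
  linear_combination (1 + t) * (1 - t) * hu2

lemma hasDerivAt_G (ht : t ∈ Ioo (-1) 1) (hL : L a b t ≠ 0) :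
    HasDerivAt (G a b) (G a b t / ((1 - t ^ 2) * L a b t) * Q a b t) t := by
  have h1 : 0 < 1 + t := by linarith [ht.1]
  have h2 : 0 < 1 - t := by linarith [ht.2]
  have hA := ((hasDerivAt_id t).const_add 1).rpow_const (p := b + 1 / 2) (Or.inl h1.ne')
  have hB := ((hasDerivAt_id t).const_sub 1).rpow_const (p := 1 / 2 - a) (Or.inl h2.ne')
  refine ((hA.mul hB).div (hasDerivAt_L t) hL).congr_deriv ?_
  have h3 : 1 - t ^ 2 ≠ 0 := by nlinarith
  simp only [id, Pi.mul_apply, rpow_sub_one h1.ne', rpow_sub_one h2.ne']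
  unfold G
  field_simp
  unfold Q L
  ring

lemma phi_sub_G (ht : t ∈ Ioo (-1) 1) :
    phi a b t - G a b t = (1 + t) ^ b / (1 - t) ^ a * psi a b t := by
  have h1 : 0 < 1 + t := by linarith [ht.1]
  have h2 : 0 < 1 - t := by linarith [ht.2]
  have hsqrt : √(1 - t ^ 2) = (1 + t) ^ (1 / 2 : ℝ) * (1 - t) ^ (1 / 2 : ℝ) := by
    rw [show 1 - t ^ 2 = (1 + t) * (1 - t) by ring, sqrt_mul h1.le, sqrt_eq_rpow, sqrt_eq_rpow]
  unfold phi G psi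
  rw [rpow_add h1, rpow_sub h2, hsqrt]
  ring

lemma psi_one : psi a b 1 = 0 := by simp [psi]

lemma psi_zero_nonpos (hab : 0 < a + b) (hπ : (a + b) * π ≤ 2) : psi a b 0 ≤ 0 := by
  rw [psi, arccos_zero, L, mul_zero, add_zero, zero_pow two_ne_zero, sub_zero, sqrt_one,
    sub_nonpos, le_div_iff₀ hab]
  linarith

lemma G_le_phi (ht : t ∈ Ioo (-1) 1) (hψ : 0 ≤ psi a b t) : G a b t ≤ phi a b t := by
  have h1 : 0 < 1 + t := by linarith [ht.1]
  have h2 : 0 < 1 - t := by linarith [ht.2]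
  rw [← sub_nonneg, phi_sub_G ht]
  exact mul_nonneg (by positivity) hψ

lemma phi_mul_eq_arccos (ht : t ∈ Ioo (-1) 1) :
    phi a b t * ((1 - t) ^ a / (1 + t) ^ b) = arccos t := by
  have h1 : 0 < 1 + t := by linarith [ht.1]
  have h2 : 0 < 1 - t := by linarith [ht.2]
  unfold phi
  field_simp

lemma strictAntiOn_psi (hb : 0 < b) (hba : b ≤ a) {p q : ℝ} (hp : -1 < p) (hq : q ≤ 1)
    (hQ : ∀ t ∈ Ioo p q, 0 < Q a b t) : StrictAntiOn (psi a b) (Icc p q) := by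
  have hL : ∀ t ∈ Icc p q, 0 < L a b t := fun t ht => L_pos hb hba (hp.le.trans ht.1)
  refine strictAntiOn_of_hasDerivWithinAt_neg (convex_Icc p q)
    (f' := fun t => -Q a b t / (√(1 - t ^ 2) * L a b t ^ 2))
    (fun t ht => (continuousAt_psi (hL t ht).ne').continuousWithinAt) (fun t ht => ?_)
    (fun t ht => ?_) <;> rw [interior_Icc] at ht
  · exact (hasDerivAt_psi ⟨hp.trans ht.1, ht.2.trans_le hq⟩
      (hL t (Ioo_subset_Icc_self ht)).ne').hasDerivWithinAt
  · have hsqrt : 0 < √(1 - t ^ 2) := sqrt_pos.mpr (by nlinarith [ht.1, ht.2])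
    exact div_neg_of_neg_of_pos (neg_lt_zero.mpr (hQ t ht))
      (mul_pos hsqrt (pow_pos (hL t (Ioo_subset_Icc_self ht)) 2))

lemma psi_neg_of_le_left_root (hb : 0 < b) (hba : b < a)
    (hQ : ∀ t, Q a b t = (a - b) ^ 2 * (t - x₁) * (t - x₂)) (hx : x₁ ≤ x₂) (h0 : psi a b 0 ≤ 0)
    (ht : t ∈ Ioo 0 1) (htx : t ≤ x₁) : psi a b t < 0 := by
  refine h0.trans_lt' <| strictAntiOn_psi hb hba.le (by norm_num) ht.2.le (fun s hs => ?_)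
    ⟨le_rfl, ht.1.le⟩ ⟨ht.1.le, le_rfl⟩ ht.1
  rw [hQ]
  exact mul_pos_of_neg_of_neg (mul_neg_of_pos_of_neg (pow_pos (sub_pos.mpr hba) 2)
    (by linarith [hs.2])) (by linarith [hs.2])

lemma psi_pos_of_right_root_le (hb : 0 < b) (hba : b < a)
    (hQ : ∀ t, Q a b t = (a - b) ^ 2 * (t - x₁) * (t - x₂)) (hx : x₁ ≤ x₂) (hx₂ : -1 < x₂)
    (ht : t ∈ Ico x₂ 1) : 0 < psi a b t := by
  rw [← psi_one (a := a) (b := b)]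
  refine strictAntiOn_psi hb hba.le (hx₂.trans_le ht.1) le_rfl (fun s hs => ?_)
    ⟨le_rfl, ht.2.le⟩ ⟨ht.2.le, le_rfl⟩ ht.2
  rw [hQ]
  exact mul_pos (mul_pos (pow_pos (sub_pos.mpr hba) 2) (by linarith [hs.1, ht.1]))
    (by linarith [hs.1, ht.1])

lemma G_div_nonneg (hb : 0 < b) (hba : b ≤ a) (ht : t ∈ Ioo (-1) 1) :
    0 ≤ G a b t / ((1 - t ^ 2) * L a b t) := by
  have hL := L_pos hb hba ht.1.le
  have h1 : 0 < 1 + t := by linarith [ht.1]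
  have h2 : 0 < 1 - t := by linarith [ht.2]
  have h3 : 0 < 1 - t ^ 2 := by nlinarith
  unfold G
  positivity

lemma monotoneOn_G (hb : 0 < b) (hba : b ≤ a) {p q : ℝ} (hp : -1 < p) (hq : q < 1)
    (hQ : ∀ t ∈ Ioo p q, 0 ≤ Q a b t) : MonotoneOn (G a b) (Icc p q) := by
  have hG : ∀ t ∈ Icc p q,
      HasDerivAt (G a b) (G a b t / ((1 - t ^ 2) * L a b t) * Q a b t) t := fun t ht =>
    hasDerivAt_G ⟨hp.trans_le ht.1, ht.2.trans_lt hq⟩ (L_pos hb hba (hp.le.trans ht.1)).ne'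
  refine monotoneOn_of_hasDerivWithinAt_nonneg (convex_Icc p q)
    (f' := fun t => G a b t / ((1 - t ^ 2) * L a b t) * Q a b t)
    (fun t ht => (hG t ht).continuousAt.continuousWithinAt) (fun t ht => ?_) (fun t ht => ?_)
    <;> rw [interior_Icc] at ht
  · exact (hG t (Ioo_subset_Icc_self ht)).hasDerivWithinAt
  · exact mul_nonneg (G_div_nonneg hb hba ⟨hp.trans ht.1, ht.2.trans hq⟩) (hQ t ht)

lemma antitoneOn_G (hb : 0 < b) (hba : b ≤ a) {p q : ℝ} (hp : -1 < p) (hq : q < 1)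
    (hQ : ∀ t ∈ Ioo p q, Q a b t ≤ 0) : AntitoneOn (G a b) (Icc p q) := by
  have hG : ∀ t ∈ Icc p q,
      HasDerivAt (G a b) (G a b t / ((1 - t ^ 2) * L a b t) * Q a b t) t := fun t ht =>
    hasDerivAt_G ⟨hp.trans_le ht.1, ht.2.trans_lt hq⟩ (L_pos hb hba (hp.le.trans ht.1)).ne'
  refine antitoneOn_of_hasDerivWithinAt_nonpos (convex_Icc p q)
    (f' := fun t => G a b t / ((1 - t ^ 2) * L a b t) * Q a b t)
    (fun t ht => (hG t ht).continuousAt.continuousWithinAt) (fun t ht => ?_) (fun t ht => ?_)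
    <;> rw [interior_Icc] at ht
  · exact (hG t (Ioo_subset_Icc_self ht)).hasDerivWithinAt
  · exact mul_nonpos_of_nonneg_of_nonpos (G_div_nonneg hb hba ⟨hp.trans ht.1, ht.2.trans hq⟩)
      (hQ t ht)

lemma G_right_root_le (hb : 0 < b) (hba : b ≤ a)
    (hQ : ∀ t, Q a b t = (a - b) ^ 2 * (t - x₁) * (t - x₂)) (hx : x₁ ≤ x₂)
    (hx₂ : x₂ ∈ Ioo (-1) 1) {z : ℝ} (hz : z ∈ Ioo (-1) 1) (hxz : x₁ ≤ z) :
    G a b x₂ ≤ G a b z := by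
  have hsq : 0 ≤ (a - b) ^ 2 := sq_nonneg _
  rcases le_total z x₂ with h | h
  · refine antitoneOn_G hb hba hz.1 hx₂.2 (fun t ht => ?_) ⟨le_rfl, h⟩ ⟨h, le_rfl⟩ h
    rw [hQ]
    exact mul_nonpos_of_nonneg_of_nonpos (mul_nonneg hsq (by linarith [ht.1])) (by linarith [ht.2])
  · refine monotoneOn_G hb hba hx₂.1 hz.2 (fun t ht => ?_) ⟨le_rfl, h⟩ ⟨h, le_rfl⟩ h
    rw [hQ]
    exact mul_nonneg (mul_nonneg hsq (by linarith [ht.1])) (by linarith [ht.1])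

lemma antitoneOn_phi (hb : 0 < b) (hba : b ≤ a) {x z : ℝ} (hx : -1 < x) (hz : z < 1)
    (hψ : ∀ t ∈ Ioo x z, psi a b t ≤ 0) : AntitoneOn (phi a b) (Icc x z) := by
  have hphi : ∀ t ∈ Icc x z, HasDerivAt (phi a b)
      ((1 + t) ^ b / (1 - t) ^ a * L a b t / (1 - t ^ 2) * psi a b t) t := fun t ht =>
    hasDerivAt_phi ⟨hx.trans_le ht.1, ht.2.trans_lt hz⟩ (L_pos hb hba (hx.le.trans ht.1)).ne'
  refine antitoneOn_of_hasDerivWithinAt_nonpos (convex_Icc x z)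
    (f' := fun t => (1 + t) ^ b / (1 - t) ^ a * L a b t / (1 - t ^ 2) * psi a b t)
    (fun t ht => (hphi t ht).continuousAt.continuousWithinAt) (fun t ht => ?_) (fun t ht => ?_)
    <;> rw [interior_Icc] at ht
  · exact (hphi t (Ioo_subset_Icc_self ht)).hasDerivWithinAt
  · have h1 : 0 < 1 + t := by linarith [ht.1]
    have h2 : 0 < 1 - t := by linarith [ht.2]
    have hL := L_pos hb hba (hx.le.trans ht.1.le)
    exact mul_nonpos_of_nonneg_of_nonpos
      (div_nonneg (by positivity) (by nlinarith)) (hψ t ht)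

lemma G_right_root_le_phi (hb : 0 < b) (hba : b < a)
    (hQ : ∀ t, Q a b t = (a - b) ^ 2 * (t - x₁) * (t - x₂)) (hx : x₁ ≤ x₂)
    (hx₂ : x₂ ∈ Ioo 0 1) (h0 : psi a b 0 ≤ 0) (ht : t ∈ Ioo 0 1) : G a b x₂ ≤ phi a b t := by
  have hL : ∀ s, -1 ≤ s → L a b s ≠ 0 := fun s hs => (L_pos hb hba.le hs).ne'
  have hy : max t x₂ < 1 := max_lt ht.2 hx₂.2
  obtain ⟨z, hz, hψz, hneg⟩ := exists_first_nonneg (le_max_left t x₂)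
    (fun s hs => (continuousAt_psi (hL s (by linarith [ht.1, hs.1]))).continuousWithinAt)
    (psi_pos_of_right_root_le hb hba hQ hx (by linarith [hx₂.1]) ⟨le_max_right t x₂, hy⟩).le
  have hz0 : 0 < z := ht.1.trans_le hz.1
  have hz1 : z < 1 := hz.2.trans_lt hy
  have hx₁z : x₁ ≤ z := not_lt.mp fun h =>
    (psi_neg_of_le_left_root hb hba hQ hx h0 ⟨hz0, hz1⟩ h.le).not_ge hψz
  calc G a b x₂ ≤ G a b z :=
        G_right_root_le hb hba.le hQ hx ⟨by linarith [hx₂.1], hx₂.2⟩ ⟨by linarith, hz1⟩ hx₁z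
    _ ≤ phi a b z := G_le_phi ⟨by linarith, hz1⟩ hψz
    _ ≤ phi a b t := antitoneOn_phi hb hba.le (by linarith [ht.1]) hz1
        (fun s hs => (hneg s ⟨hs.1.le, hs.2⟩).le) ⟨le_rfl, hz.1⟩ ⟨hz.1, le_rfl⟩ hz.1

end Carlson

theorem carlson_arccos_lower_bound_extreme (a b : ℝ)
    (h1 : 1 / 3 < a - b) (h2 : a - b < 4 / Real.pi ^ 2)
    (h3 : 1 / 2 < a) (h4 : a ≤ 2 / Real.pi - b)
    (h5 : 16 * a * b * (b - a) + (a + b) ^ 2 > 0)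
    (h6 : ((a + b) * (2 * b - 2 * a + 1) +
        Real.sqrt (16 * a * b * (b - a) + (a + b) ^ 2)) / (2 * (a - b) ^ 2) ∈
        Set.Ioo (0 : ℝ) 1) :
    ∀ x ∈ Set.Ioo (0 : ℝ) 1,
      Real.arccos x ≥
        ((1 + ((a + b) * (2 * b - 2 * a + 1) +
              Real.sqrt (16 * a * b * (b - a) + (a + b) ^ 2)) / (2 * (a - b) ^ 2)) ^ (b + 1 / 2) *
          (1 - ((a + b) * (2 * b - 2 * a + 1) +
              Real.sqrt (16 * a * b * (b - a) + (a + b) ^ 2)) / (2 * (a - b) ^ 2)) ^ (1 / 2 - a) /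
          (a + b + (a - b) * (((a + b) * (2 * b - 2 * a + 1) +
              Real.sqrt (16 * a * b * (b - a) + (a + b) ^ 2)) / (2 * (a - b) ^ 2)))) *
        ((1 - x) ^ a / (1 + x) ^ b) := by
  intro x hx
  have hba : b < a := by linarith
  have hb : 0 < b := by
    have : 4 / π ^ 2 < 1 / 2 := by
      rw [div_lt_div_iff₀ (by positivity) (by norm_num)]
      nlinarith [pi_gt_three]
    linarith
  have hψ0 : Carlson.psi a b 0 ≤ 0 :=
    Carlson.psi_zero_nonpos (by linarith) ((le_div_iff₀ pi_pos).mp (by linarith))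
  have hG := Carlson.G_right_root_le_phi hb hba
    (Carlson.Q_eq_mul_sub_root hba.ne' (sq_sqrt h5.le)) (Carlson.root_neg_le_root (sqrt_nonneg _))
    h6 hψ0 hx
  have hx0 : 0 < 1 + x := by linarith [hx.1]
  have hx1 : 0 < 1 - x := by linarith [hx.2]
  rw [ge_iff_le, ← Carlson.phi_mul_eq_arccos (a := a) (b := b) ⟨by linarith, hx.2⟩]
  exact mul_le_mul_of_nonneg_right hG (by positivity)
end

section
/- For every x ∈ (0,1), the double inequality 4^{1/π}·(1−x)^{1/2} / (1+x)^{(4−π)/(2π)} < arccos(x) < (π/2)·(1−x)^{1/2} / (1+x)^{(4−π)/(2π)} holds. -/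
open Real Set

/-!
Write `x = cos (2v)` with `v ∈ (0, π/4)` and `p = (4 - π)/π`. Then
`(1 - x)^(1/2) / (1 + x)^(p/2) = 2^(1 - 2/π) sin v / cos v ^ p`, and both bounds say that
`v cos v ^ p / sin v` lies strictly between its limit `1` at `v = 0` and its value at `v = π/4`.
So it suffices that the logarithm of this ratio increases on `[0, π/4]`. Its derivative at `v`
has the sign of `F (2v)`, where `F u = sin u - u (2 + (π - 2) cos u) / π`. Now `F` vanishes at
`0` and `π/2`, and `F' (2v)` has the sign of `π - 2 - tan v / v`, which changes sign at most
once, from `+` to `-`, because `tan v / v` increases; hence `F > 0` on `(0, π/2)`.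
-/

theorem pos_on_Ioo_of_deriv_stays_neg {f f' : ℝ → ℝ} {a b : ℝ}
    (hfc : ContinuousOn f (Icc a b)) (hf : ∀ x ∈ Ioo a b, HasDerivAt f (f' x) x)
    (hf' : ∀ s ∈ Ioo a b, f' s ≤ 0 → ∀ t ∈ Ioo s b, f' t < 0)
    (ha : 0 ≤ f a) (hb : 0 ≤ f b) {u : ℝ} (hu : u ∈ Ioo a b) : 0 < f u := by
  by_contra! hfu
  obtain ⟨s, hs, hslope⟩ := exists_hasDerivAt_eq_slope f f' hu.1
    (hfc.mono (Icc_subset_Icc_right hu.2.le)) fun x hx ↦ hf x ⟨hx.1, hx.2.trans hu.2⟩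
  have hs_nonpos : f' s ≤ 0 := by
    rw [hslope]
    exact div_nonpos_of_nonpos_of_nonneg (by linarith) (by linarith [hu.1])
  have hanti : StrictAntiOn f (Icc s b) := by
    refine strictAntiOn_of_hasDerivWithinAt_neg (f' := f') (convex_Icc s b)
      (hfc.mono (Icc_subset_Icc_left hs.1.le)) (fun x hx ↦ ?_) fun x hx ↦ ?_ <;>
      rw [interior_Icc] at hx
    · exact (hf x ⟨hs.1.trans hx.1, hx.2⟩).hasDerivWithinAt
    · exact hf' s ⟨hs.1, hs.2.trans hu.2⟩ hs_nonpos x hx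
  have := hanti ⟨hs.2.le, hu.2.le⟩ ⟨hs.2.trans hu.2 |>.le, le_rfl⟩ hu.2
  linarith

theorem sin_pos_of_mem_Ioo_zero_pi_div_two {x : ℝ} (hx : x ∈ Ioo 0 (π / 2)) : 0 < sin x :=
  sin_pos_of_pos_of_lt_pi hx.1 (by linarith [hx.2, pi_pos])

theorem cos_pos_of_mem_Ioo_zero_pi_div_two {x : ℝ} (hx : x ∈ Ioo 0 (π / 2)) : 0 < cos x :=
  cos_pos_of_mem_Ioo ⟨by linarith [hx.1, pi_pos], hx.2⟩

theorem strictMonoOn_tan_div_self : StrictMonoOn (fun x ↦ tan x / x) (Ioo 0 (π / 2)) := by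
  have hderiv : ∀ x ∈ Ioo 0 (π / 2),
      HasDerivAt (fun x ↦ tan x / x) ((1 / cos x ^ 2 * x - tan x * 1) / x ^ 2) x :=
    fun x hx ↦ (hasDerivAt_tan (cos_pos_of_mem_Ioo_zero_pi_div_two hx).ne').div
      (hasDerivAt_id x) hx.1.ne'
  refine strictMonoOn_of_deriv_pos (convex_Ioo _ _)
    (fun x hx ↦ (hderiv x hx).continuousAt.continuousWithinAt) fun x hx ↦ ?_
  rw [interior_Ioo] at hx
  have hcos := cos_pos_of_mem_Ioo_zero_pi_div_two hx
  have hsin_mul_cos : sin x * cos x < x := by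
    have := sin_lt (by linarith [hx.1] : 0 < 2 * x)
    rw [sin_two_mul] at this
    linarith
  have : 1 / cos x ^ 2 * x - tan x * 1 = (x - sin x * cos x) / cos x ^ 2 := by
    rw [tan_eq_sin_div_cos]
    field_simp
  rw [(hderiv x hx).deriv, this]
  have := hx.1
  exact div_pos (div_pos (by linarith) (by positivity)) (by positivity)

theorem mul_two_add_mul_cos_div_pi_lt_sin {u : ℝ} (hu : u ∈ Ioo 0 (π / 2)) :
    u * (2 + (π - 2) * cos u) / π < sin u := by
  set F : ℝ → ℝ := fun u ↦ sin u - u * (2 + (π - 2) * cos u) / π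
  set F' : ℝ → ℝ := fun u ↦ ((π - 2) * u * sin u - 2 * (1 - cos u)) / π
  have hF : ∀ u, HasDerivAt F (F' u) u := by
    intro u
    refine ((hasDerivAt_sin u).sub (((hasDerivAt_id' u).mul
      (((hasDerivAt_cos u).const_mul (π - 2)).const_add 2)).div_const π)).congr_deriv ?_
    simp only [F']
    field_simp
    ring
  have hF'_half : ∀ v ∈ Ioo 0 (π / 2),
      F' (2 * v) = 4 * v * sin v * cos v / π * (π - 2 - tan v / v) ∧
        0 < 4 * v * sin v * cos v / π := by
    intro v hv
    have hcos := cos_pos_of_mem_Ioo_zero_pi_div_two hv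
    have hsin := sin_pos_of_mem_Ioo_zero_pi_div_two hv
    refine ⟨?_, by have := hv.1; positivity⟩
    have hv0 : v ≠ 0 := hv.1.ne'
    simp only [F', sin_two_mul, cos_two_mul, tan_eq_sin_div_cos]
    field_simp
    linear_combination 4 * sin_sq_add_cos_sq v
  have hF'_stays_neg :
      ∀ s ∈ Ioo 0 (π / 2), F' s ≤ 0 → ∀ t ∈ Ioo s (π / 2), F' t < 0 := by
    intro s hs hFs t ht
    have hs2 : s / 2 ∈ Ioo 0 (π / 2) := ⟨by linarith [hs.1], by linarith [hs.2, pi_pos]⟩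
    have ht2 : t / 2 ∈ Ioo 0 (π / 2) :=
      ⟨by linarith [hs.1, ht.1], by linarith [ht.2, pi_pos]⟩
    obtain ⟨hFs_eq, hPs⟩ := hF'_half _ hs2
    obtain ⟨hFt_eq, hPt⟩ := hF'_half _ ht2
    rw [show s = 2 * (s / 2) by ring, hFs_eq] at hFs
    rw [show t = 2 * (t / 2) by ring, hFt_eq]
    have : tan (s / 2) / (s / 2) < tan (t / 2) / (t / 2) :=
      strictMonoOn_tan_div_self hs2 ht2 (by linarith [ht.1])
    exact mul_neg_of_pos_of_neg hPt (by linarith [nonpos_of_mul_nonpos_right hFs hPs])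
  have := pos_on_Ioo_of_deriv_stays_neg (fun x _ ↦ (hF x).continuousAt.continuousWithinAt)
    (fun x _ ↦ hF x) hF'_stays_neg (by simp [F]) (by simp [F]) hu
  simpa [F] using this

/-- `log (x cos x ^ p / sin x)` with `p = (4 - π) / π`, written with `sinc` so that it is
continuous at `0`. -/
noncomputable def carlsonLog (x : ℝ) : ℝ := (4 - π) / π * log (cos x) - log (sinc x)

theorem sinc_pos_of_mem_Ico {x : ℝ} (hx : x ∈ Ico 0 π) : 0 < sinc x := by
  rcases hx.1.eq_or_lt with rfl | hx0
  · simp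
  · rw [sinc_of_ne_zero hx0.ne']
    exact div_pos (sin_pos_of_pos_of_lt_pi hx0 hx.2) hx0

theorem hasDerivAt_carlsonLog {x : ℝ} (hx : x ∈ Ioo 0 (π / 2)) :
    HasDerivAt carlsonLog
      ((sin (2 * x) - 2 * x * (2 + (π - 2) * cos (2 * x)) / π) / (x * sin (2 * x))) x := by
  have hcos := cos_pos_of_mem_Ioo_zero_pi_div_two hx
  have hsin := sin_pos_of_mem_Ioo_zero_pi_div_two hx
  have hsinc : sinc =ᶠ[nhds x] fun y ↦ sin y / y :=
    (eventually_ne_nhds hx.1.ne').mono fun y hy ↦ sinc_of_ne_zero hy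
  have hx0 : x ≠ 0 := hx.1.ne'
  have hd := (((hasDerivAt_cos x).log hcos.ne').const_mul ((4 - π) / π)).sub
    ((((hasDerivAt_sin x).div (hasDerivAt_id x) hx0).congr_of_eventuallyEq hsinc).log
      (sinc_pos_of_mem_Ico ⟨hx.1.le, by linarith [hx.2, pi_pos]⟩).ne')
  refine hd.congr_deriv ?_
  rw [sinc_of_ne_zero hx0, sin_two_mul, cos_two_mul]
  simp only [id]
  field_simp
  linear_combination ((π - 4) * x) * sin_sq_add_cos_sq x

theorem strictMonoOn_carlsonLog : StrictMonoOn carlsonLog (Icc 0 (π / 4)) := by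
  have hcont : ContinuousOn carlsonLog (Icc 0 (π / 4)) := by
    refine (continuousOn_const.mul (continuous_cos.continuousOn.log fun x hx ↦ ?_)).sub
      (continuous_sinc.continuousOn.log fun x hx ↦ ?_)
    · exact (cos_pos_of_mem_Ioo ⟨by linarith [hx.1, pi_pos], by linarith [hx.2, pi_pos]⟩).ne'
    · exact (sinc_pos_of_mem_Ico ⟨hx.1, by linarith [hx.2, pi_pos]⟩).ne'
  refine strictMonoOn_of_deriv_pos (convex_Icc _ _) hcont fun x hx ↦ ?_
  rw [interior_Icc] at hx
  rw [(hasDerivAt_carlsonLog ⟨hx.1, by linarith [hx.2, pi_pos]⟩).deriv]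
  have h2x : 2 * x ∈ Ioo 0 (π / 2) := ⟨by linarith [hx.1], by linarith [hx.2]⟩
  have := mul_two_add_mul_cos_div_pi_lt_sin h2x
  have := sin_pos_of_mem_Ioo_zero_pi_div_two h2x
  have := hx.1
  exact div_pos (by linarith) (by positivity)

theorem exp_carlsonLog {x : ℝ} (hx : x ∈ Ioo 0 (π / 2)) :
    exp (carlsonLog x) = x * cos x ^ ((4 - π) / π) / sin x := by
  have hcos := cos_pos_of_mem_Ioo_zero_pi_div_two hx
  have hsin := sin_pos_of_mem_Ioo_zero_pi_div_two hx
  rw [carlsonLog, exp_sub, exp_log (sinc_pos_of_mem_Ico ⟨hx.1.le, by linarith [hx.2, pi_pos]⟩),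
    sinc_of_ne_zero hx.1.ne', rpow_def_of_pos hcos, mul_comm (log _)]
  field_simp

theorem exp_carlsonLog_pi_div_four : exp (carlsonLog (π / 4)) = π / 4 * 2 ^ (1 - 2 / π) := by
  have h : √2 / 2 = (2 : ℝ) ^ (-(1 / 2 : ℝ)) := by
    rw [sqrt_eq_rpow, ← rpow_sub_one two_ne_zero]
    norm_num
  rw [exp_carlsonLog ⟨by positivity, by linarith [pi_pos]⟩, cos_pi_div_four, sin_pi_div_four,
    mul_div_assoc, ← rpow_sub_one (by positivity), h, ← rpow_mul zero_le_two]
  congr 2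
  field_simp
  ring

theorem sin_div_cos_rpow_lt_self_and_self_lt_mul {v : ℝ} (hv : v ∈ Ioo 0 (π / 4)) :
    sin v / cos v ^ ((4 - π) / π) < v ∧
      v < π / 4 * 2 ^ (1 - 2 / π) * (sin v / cos v ^ ((4 - π) / π)) := by
  have hv' : v ∈ Ioo 0 (π / 2) := ⟨hv.1, by linarith [hv.2, pi_pos]⟩
  have hcos : 0 < cos v ^ ((4 - π) / π) :=
    rpow_pos_of_pos (cos_pos_of_mem_Ioo_zero_pi_div_two hv') _
  have hsin := sin_pos_of_mem_Ioo_zero_pi_div_two hv'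
  have hmem : v ∈ Icc 0 (π / 4) := ⟨hv.1.le, hv.2.le⟩
  have hlow : carlsonLog 0 < carlsonLog v :=
    strictMonoOn_carlsonLog ⟨le_rfl, by positivity⟩ hmem hv.1
  have hupp : carlsonLog v < carlsonLog (π / 4) :=
    strictMonoOn_carlsonLog hmem ⟨by positivity, le_rfl⟩ hv.2
  rw [← exp_lt_exp, exp_carlsonLog hv'] at hlow hupp
  rw [exp_carlsonLog_pi_div_four] at hupp
  simp only [carlsonLog, cos_zero, log_one, sinc_zero, mul_zero, sub_zero, exp_zero] at hlow
  constructor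
  · rw [div_lt_iff₀ hcos]
    rwa [lt_div_iff₀ hsin, one_mul] at hlow
  · rw [mul_div_assoc', lt_div_iff₀ hcos]
    rwa [div_lt_iff₀ hsin] at hupp

theorem one_sub_cos_two_mul_rpow_half_div_one_add_cos_two_mul_rpow {v : ℝ}
    (hv : v ∈ Ioo 0 (π / 2)) (s : ℝ) :
    (1 - cos (2 * v)) ^ (1 / 2 : ℝ) / (1 + cos (2 * v)) ^ s =
      2 ^ (1 / 2 - s) * (sin v / cos v ^ (2 * s)) := by
  have hcos := cos_pos_of_mem_Ioo_zero_pi_div_two hv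
  have hsin := sin_pos_of_mem_Ioo_zero_pi_div_two hv
  have hsq {y : ℝ} (hy : 0 ≤ y) (t : ℝ) : (2 * y ^ 2) ^ t = 2 ^ t * y ^ (2 * t) := by
    rw [mul_rpow zero_le_two (by positivity), ← rpow_natCast_mul hy, Nat.cast_ofNat]
  have h1 : 1 - cos (2 * v) = 2 * sin v ^ 2 := by
    rw [cos_two_mul]; linear_combination (-2) * sin_sq_add_cos_sq v
  have h2 : 1 + cos (2 * v) = 2 * cos v ^ 2 := by rw [cos_two_mul]; ring
  rw [h1, h2, hsq hsin.le, hsq hcos.le, rpow_sub two_pos, mul_one_div_cancel two_ne_zero, rpow_one]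
  field_simp

theorem carlson_arccos_double_ineq_pi_exponent :
    ∀ x ∈ Set.Ioo (0 : ℝ) 1,
      (4 : ℝ) ^ (1 / Real.pi) * (1 - x) ^ ((1 : ℝ) / 2) /
          (1 + x) ^ ((4 - Real.pi) / (2 * Real.pi)) < Real.arccos x ∧
      Real.arccos x < Real.pi / 2 * (1 - x) ^ ((1 : ℝ) / 2) /
          (1 + x) ^ ((4 - Real.pi) / (2 * Real.pi)) := by
  intro x hx
  obtain ⟨v, hv, harccos⟩ : ∃ v ∈ Ioo 0 (π / 4), arccos x = 2 * v :=
    ⟨arccos x / 2,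
      ⟨by linarith [arccos_pos.2 hx.2], by linarith [arccos_lt_pi_div_two.2 hx.1]⟩, by ring⟩
  have hratio : (1 - x) ^ ((1 : ℝ) / 2) / (1 + x) ^ ((4 - π) / (2 * π)) =
      2 ^ (1 - 2 / π) * (sin v / cos v ^ ((4 - π) / π)) := by
    have hv' : v ∈ Ioo 0 (π / 2) := ⟨hv.1, by linarith [hv.2, pi_pos]⟩
    rw [← cos_arccos (by linarith [hx.1]) hx.2.le, harccos,
      one_sub_cos_two_mul_rpow_half_div_one_add_cos_two_mul_rpow hv']
    congr 2
    · field_simp; ring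
    · field_simp
  have hconst : (4 : ℝ) ^ (1 / π) * 2 ^ (1 - 2 / π) = 2 := by
    rw [show (4 : ℝ) = 2 ^ (2 : ℝ) by norm_num, ← rpow_mul zero_le_two, ← rpow_add two_pos]
    convert rpow_one (2 : ℝ) using 2
    ring
  obtain ⟨hlow, hupp⟩ := sin_div_cos_rpow_lt_self_and_self_lt_mul hv
  rw [mul_div_assoc, mul_div_assoc, hratio, harccos, ← mul_assoc, hconst]
  constructor <;> linarith
end
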